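/- arXiv:1612.08045 — 3 statements merged into one kernel-verified Lean document; each statement's English description precedes it below -/
import Mathlib

section
/- Let B_r = B(0,r) ⊂ ℝ^d with r ∈ (0,1], let δ(x) denote the distance of x to ∂B_r, and let Φ: (0,∞) → (0,∞) be increasing with Φ(λs) ≤ λΦ(s) for λ ≥ 1 (a consequence of the Bernstein bound). Suppose G: B_r × B_r → (0,∞) satisfies the two-sided estimate C⁻¹ g(x,y) ≤ G(x,y) ≤ C g(x,y) where g(x,y) = (Φ(|x−y|)/|x−y|^d)·(1 ∧ Φ(δ(x))^{1/2}Φ(δ(y))^{1/2}/Φ(|x−y|)). Then there is a constant C₄ = C₄(C) such that for all x, y, z, w ∈ B_r with (x,w) ∈ E_r := {(x,w) : |x−w| ≤ ½ max(δ(x), δ(w))}, one has G(x,y)G(z,w)/G(x,w) ≤ C₄ · (Φ(|x−y|)Φ(|z−w|)/Φ(|x−w|)) · |x−w|^d/(|x−y|^d |z−w|^d). -/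
/-- interior 3G inequality: with `δ(x) = r - ‖x‖`, `Φ` increasing
satisfying `Φ(λs) ≤ λ Φ(s)` for `λ ≥ 1`, and `G` comparable (with constant `C`)
to `g(x,y) = (Φ(|x−y|)/|x−y|^d)·(1 ∧ √(Φ(δx)) √(Φ(δy))/Φ(|x−y|))` on
`B_r × B_r`, there is `C₄ = C₄(C)` such that for `(x,w) ∈ E_r`
(i.e. `|x−w| ≤ ½ max(δ(x),δ(w))`),
`G(x,y)G(z,w)/G(x,w) ≤ C₄ (Φ|x−y| Φ|z−w| / Φ|x−w|) |x−w|^d/(|x−y|^d |z−w|^d)`. -/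
theorem stmt7 (C : ℝ) (hC : 1 ≤ C) :
    ∃ C₄ > (0:ℝ), ∀ (d : ℕ) (r : ℝ), 0 < r → r ≤ 1 →
    ∀ Φ : ℝ → ℝ, (∀ s > (0:ℝ), 0 < Φ s) →
      (∀ s t : ℝ, 0 < s → s ≤ t → Φ s ≤ Φ t) →
      (∀ l ≥ (1:ℝ), ∀ s > (0:ℝ), Φ (l * s) ≤ l * Φ s) →
    ∀ G : EuclideanSpace ℝ (Fin d) → EuclideanSpace ℝ (Fin d) → ℝ,
      (∀ x y : EuclideanSpace ℝ (Fin d),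
        x ∈ Metric.ball 0 r → y ∈ Metric.ball 0 r → x ≠ y →
        C⁻¹ * (Φ ‖x - y‖ / ‖x - y‖ ^ d *
            min 1 (Real.sqrt (Φ (r - ‖x‖)) * Real.sqrt (Φ (r - ‖y‖)) / Φ ‖x - y‖))
          ≤ G x y ∧
        G x y ≤ C * (Φ ‖x - y‖ / ‖x - y‖ ^ d *
            min 1 (Real.sqrt (Φ (r - ‖x‖)) * Real.sqrt (Φ (r - ‖y‖)) / Φ ‖x - y‖))) →
    ∀ x y z w : EuclideanSpace ℝ (Fin d),
      x ∈ Metric.ball 0 r → y ∈ Metric.ball 0 r →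
      z ∈ Metric.ball 0 r → w ∈ Metric.ball 0 r →
      x ≠ y → z ≠ w → x ≠ w →
      ‖x - w‖ ≤ (1/2) * max (r - ‖x‖) (r - ‖w‖) →
      G x y * G z w / G x w ≤
        C₄ * (Φ ‖x - y‖ * Φ ‖z - w‖ / Φ ‖x - w‖) *
          (‖x - w‖ ^ d / (‖x - y‖ ^ d * ‖z - w‖ ^ d)) := by
  have hC0 : (0:ℝ) < C := lt_of_lt_of_le one_pos hC
  refine ⟨C ^ 3, by positivity, ?_⟩
  intro d r hr hr1 Φ hΦpos hΦmono _hΦscale G hG x y z w hx hy hz hw hxy hzw hxw hE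
  set a := ‖x - y‖ with ha_def
  set b := ‖z - w‖ with hb_def
  set c := ‖x - w‖ with hc_def
  have ha : 0 < a := norm_sub_pos_iff.mpr hxy
  have hb : 0 < b := norm_sub_pos_iff.mpr hzw
  have hc : 0 < c := norm_sub_pos_iff.mpr hxw
  have hδx : 0 < r - ‖x‖ := sub_pos.mpr (mem_ball_zero_iff.mp hx)
  have hδw : 0 < r - ‖w‖ := sub_pos.mpr (mem_ball_zero_iff.mp hw)
  have hΦa : 0 < Φ a := hΦpos a ha
  have hΦb : 0 < Φ b := hΦpos b hb
  have hΦc : 0 < Φ c := hΦpos c hc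
  -- min of the two distances is ≥ c
  have habs : |(r - ‖x‖) - (r - ‖w‖)| ≤ c := by
    have := abs_norm_sub_norm_le x w
    calc |(r - ‖x‖) - (r - ‖w‖)| = |‖x‖ - ‖w‖| := by rw [abs_sub_comm]; ring_nf
    _ ≤ ‖x - w‖ := abs_norm_sub_norm_le x w
  have hmin : c ≤ min (r - ‖x‖) (r - ‖w‖) := by
    have hM := hE
    rcases le_total (r - ‖x‖) (r - ‖w‖) with h | h
    · rw [min_eq_left h]
      rw [max_eq_right h] at hM
      have : r - ‖w‖ - (r - ‖x‖) ≤ c := le_trans (le_abs_self _) (by rwa [abs_sub_comm] at habs)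
      linarith
    · rw [min_eq_right h]
      rw [max_eq_left h] at hM
      have : r - ‖x‖ - (r - ‖w‖) ≤ c := le_trans (le_abs_self _) habs
      linarith
  have hΦδx : Φ c ≤ Φ (r - ‖x‖) := hΦmono c _ hc (le_trans hmin (min_le_left _ _))
  have hΦδw : Φ c ≤ Φ (r - ‖w‖) := hΦmono c _ hc (le_trans hmin (min_le_right _ _))
  -- the min in the lower bound for G x w equals 1
  have hmin1 : min 1 (Real.sqrt (Φ (r - ‖x‖)) * Real.sqrt (Φ (r - ‖w‖)) / Φ c) = 1 := by
    have h1 : Φ c ≤ Real.sqrt (Φ (r - ‖x‖)) * Real.sqrt (Φ (r - ‖w‖)) := by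
      calc Φ c = Real.sqrt (Φ c) * Real.sqrt (Φ c) :=
            (Real.mul_self_sqrt hΦc.le).symm
        _ ≤ Real.sqrt (Φ (r - ‖x‖)) * Real.sqrt (Φ (r - ‖w‖)) := by
            apply mul_le_mul (Real.sqrt_le_sqrt hΦδx) (Real.sqrt_le_sqrt hΦδw)
              (Real.sqrt_nonneg _) (Real.sqrt_nonneg _)
    rw [min_eq_left]
    rw [le_div_iff₀ hΦc]
    linarith
  obtain ⟨hGxw_lo, _⟩ := hG x w hx hw hxw
  rw [hmin1, mul_one] at hGxw_lo
  have hD : (0:ℝ) < C⁻¹ * (Φ c / c ^ d) := by positivity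
  have hGxw : C⁻¹ * (Φ c / c ^ d) ≤ G x w := hGxw_lo
  -- upper bounds on G x y and G z w
  have hGxy : G x y ≤ C * (Φ a / a ^ d) := by
    obtain ⟨_, h⟩ := hG x y hx hy hxy
    refine h.trans ?_
    exact mul_le_mul_of_nonneg_left
      (mul_le_of_le_one_right (div_pos hΦa (pow_pos ha d)).le (min_le_left _ _)) hC0.le
  have hGzw : G z w ≤ C * (Φ b / b ^ d) := by
    obtain ⟨_, h⟩ := hG z w hz hw hzw
    rw [← hb_def] at h
    refine h.trans ?_
    exact mul_le_mul_of_nonneg_left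
      (mul_le_of_le_one_right (div_pos hΦb (pow_pos hb d)).le (min_le_left _ _)) hC0.le
  have hGxy0 : (0:ℝ) ≤ G x y := by
    obtain ⟨h, _⟩ := hG x y hx hy hxy
    rw [← ha_def] at h
    refine le_trans ?_ h
    have hm : (0:ℝ) < min 1 (Real.sqrt (Φ (r - ‖x‖)) * Real.sqrt (Φ (r - ‖y‖)) / Φ a) := by
      apply lt_min one_pos
      have := hΦpos _ hδx
      have hδy : 0 < r - ‖y‖ := sub_pos.mpr (mem_ball_zero_iff.mp hy)
      have := hΦpos _ hδy
      positivity
    exact mul_nonneg (inv_nonneg.mpr hC0.le)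
      (mul_nonneg (by positivity) hm.le)
  have hGzw0 : (0:ℝ) ≤ G z w := by
    obtain ⟨h, _⟩ := hG z w hz hw hzw
    rw [← hb_def] at h
    refine le_trans ?_ h
    have hm : (0:ℝ) < min 1 (Real.sqrt (Φ (r - ‖z‖)) * Real.sqrt (Φ (r - ‖w‖)) / Φ b) := by
      apply lt_min one_pos
      have hδz : 0 < r - ‖z‖ := sub_pos.mpr (mem_ball_zero_iff.mp hz)
      have := hΦpos _ hδz
      have := hΦpos _ hδw
      positivity
    exact mul_nonneg (inv_nonneg.mpr hC0.le)
      (mul_nonneg (by positivity) hm.le)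
  have key : G x y * G z w / G x w ≤
      (C * (Φ a / a ^ d)) * (C * (Φ b / b ^ d)) / (C⁻¹ * (Φ c / c ^ d)) := by
    apply div_le_div₀ (by positivity)
      (mul_le_mul hGxy hGzw hGzw0 (by positivity)) hD hGxw
  refine key.trans (le_of_eq ?_)
  have hCne : C ≠ 0 := hC0.ne'
  have hane : a ^ d ≠ 0 := (pow_pos ha d).ne'
  have hbne : b ^ d ≠ 0 := (pow_pos hb d).ne'
  have hcne : c ^ d ≠ 0 := (pow_pos hc d).ne'
  have hΦcne : Φ c ≠ 0 := hΦc.ne'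
  field_simp
end

section
/- In the setting of the previous 3G-type inequality, for x, y, z, w ∈ B_r with (x,w) ∉ E_r (i.e., |x−w| > ½ max(δ(x), δ(w))), one has G(x,y)G(z,w)/G(x,w) ≤ C₄ · Φ(|x−y|)^{1/2} Φ(|z−w|)^{1/2} · |x−w|^d/(|x−y|^d |z−w|^d), where C₄ depends only on the comparison constant C in the Green function estimate and on the property Φ(s/2) ≥ Φ(s)/4. -/
/-- boundary 3G inequality: in the same setting as the interior
3G inequality, with additionally `Φ(s)/4 ≤ Φ(s/2)`, for `(x,w) ∉ E_r`
(i.e. `|x−w| > ½ max(δ(x),δ(w))`) one has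
`G(x,y)G(z,w)/G(x,w) ≤ C₄ √(Φ|x−y|) √(Φ|z−w|) |x−w|^d/(|x−y|^d |z−w|^d)`,
where `C₄` depends only on the comparison constant `C`. -/
theorem stmt8 (C : ℝ) (hC : 1 ≤ C) :
    ∃ C₄ > (0:ℝ), ∀ (d : ℕ) (r : ℝ), 0 < r → r ≤ 1 →
    ∀ Φ : ℝ → ℝ, (∀ s > (0:ℝ), 0 < Φ s) →
      (∀ s t : ℝ, 0 < s → s ≤ t → Φ s ≤ Φ t) →
      (∀ l ≥ (1:ℝ), ∀ s > (0:ℝ), Φ (l * s) ≤ l * Φ s) →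
      (∀ s > (0:ℝ), Φ s / 4 ≤ Φ (s / 2)) →
    ∀ G : EuclideanSpace ℝ (Fin d) → EuclideanSpace ℝ (Fin d) → ℝ,
      (∀ x y : EuclideanSpace ℝ (Fin d),
        x ∈ Metric.ball 0 r → y ∈ Metric.ball 0 r → x ≠ y →
        C⁻¹ * (Φ ‖x - y‖ / ‖x - y‖ ^ d *
            min 1 (Real.sqrt (Φ (r - ‖x‖)) * Real.sqrt (Φ (r - ‖y‖)) / Φ ‖x - y‖))
          ≤ G x y ∧
        G x y ≤ C * (Φ ‖x - y‖ / ‖x - y‖ ^ d *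
            min 1 (Real.sqrt (Φ (r - ‖x‖)) * Real.sqrt (Φ (r - ‖y‖)) / Φ ‖x - y‖))) →
    ∀ x y z w : EuclideanSpace ℝ (Fin d),
      x ∈ Metric.ball 0 r → y ∈ Metric.ball 0 r →
      z ∈ Metric.ball 0 r → w ∈ Metric.ball 0 r →
      x ≠ y → z ≠ w → x ≠ w →
      (1/2) * max (r - ‖x‖) (r - ‖w‖) < ‖x - w‖ →
      G x y * G z w / G x w ≤
        C₄ * (Real.sqrt (Φ ‖x - y‖) * Real.sqrt (Φ ‖z - w‖)) *
          (‖x - w‖ ^ d / (‖x - y‖ ^ d * ‖z - w‖ ^ d)) := by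
  refine ⟨16 * C ^ 3, by positivity, ?_⟩
  intro d r hr hr1 Φ hΦpos hΦmono hΦl hΦhalf G hG x y z w hx hy hz hw hxy hzw hxw hE
  have hC0 : (0:ℝ) < C := lt_of_lt_of_le one_pos hC
  obtain ⟨hGxy_lb, hGxy_ub⟩ := hG x y hx hy hxy
  obtain ⟨hGzw_lb, hGzw_ub⟩ := hG z w hz hw hzw
  obtain ⟨hGxw_lb, hGxw_ub⟩ := hG x w hx hw hxw
  rw [mem_ball_zero_iff] at hx hy hz hw
  have ha : 0 < ‖x - y‖ := norm_sub_pos_iff.mpr hxy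
  have hb : 0 < ‖z - w‖ := norm_sub_pos_iff.mpr hzw
  have hc : 0 < ‖x - w‖ := norm_sub_pos_iff.mpr hxw
  have hdx : 0 < r - ‖x‖ := by linarith
  have hdy : 0 < r - ‖y‖ := by linarith
  have hdz : 0 < r - ‖z‖ := by linarith
  have hdw : 0 < r - ‖w‖ := by linarith
  have hΦa : 0 < Φ ‖x - y‖ := hΦpos _ ha
  have hΦb : 0 < Φ ‖z - w‖ := hΦpos _ hb
  have hΦc : 0 < Φ ‖x - w‖ := hΦpos _ hc
  have hApos : 0 < Real.sqrt (Φ ‖x - y‖) := Real.sqrt_pos.mpr hΦa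
  have hBpos : 0 < Real.sqrt (Φ ‖z - w‖) := Real.sqrt_pos.mpr hΦb
  have hDxpos : 0 < Real.sqrt (Φ (r - ‖x‖)) := Real.sqrt_pos.mpr (hΦpos _ hdx)
  have hDypos : 0 < Real.sqrt (Φ (r - ‖y‖)) := Real.sqrt_pos.mpr (hΦpos _ hdy)
  have hDzpos : 0 < Real.sqrt (Φ (r - ‖z‖)) := Real.sqrt_pos.mpr (hΦpos _ hdz)
  have hDwpos : 0 < Real.sqrt (Φ (r - ‖w‖)) := Real.sqrt_pos.mpr (hΦpos _ hdw)
  set a := ‖x - y‖ with ha_def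
  set b := ‖z - w‖ with hb_def
  set c := ‖x - w‖ with hc_def
  set A := Real.sqrt (Φ a) with hA_def
  set B := Real.sqrt (Φ b) with hB_def
  set Dx := Real.sqrt (Φ (r - ‖x‖)) with hDx_def
  set Dy := Real.sqrt (Φ (r - ‖y‖)) with hDy_def
  set Dz := Real.sqrt (Φ (r - ‖z‖)) with hDz_def
  set Dw := Real.sqrt (Φ (r - ‖w‖)) with hDw_def
  -- rewrite the min expressions
  have hmin_rw : ∀ P Q : ℝ, 0 < P → P / a ^ d * min 1 (Q / P) = min P Q / a ^ d → True := fun _ _ _ _ => trivial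
  have key_rw : ∀ (P Q R : ℝ), 0 < P → P / R * min 1 (Q / P) = min P Q / R := by
    intro P Q R hP
    rcases le_total Q P with h | h
    · rw [min_eq_right ((div_le_one hP).mpr h), min_eq_right h, div_mul_div_comm,
        mul_comm R P, mul_div_mul_left _ _ hP.ne']
    · rw [min_eq_left ((one_le_div hP).mpr h), mul_one, min_eq_left h]
  rw [key_rw _ _ _ hΦa] at hGxy_ub
  rw [key_rw _ _ _ hΦb] at hGzw_ub
  rw [key_rw _ _ _ hΦc] at hGxw_lb
  -- upper bound for min (Φ a) (Dx * Dy)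
  have tri1 : ‖x‖ - ‖y‖ ≤ a := norm_sub_norm_le x y
  have tri2 : ‖w‖ - ‖z‖ ≤ b := by
    have h := norm_sub_norm_le w z
    rwa [norm_sub_rev] at h
  have sqA : A * A = Φ a := Real.mul_self_sqrt hΦa.le
  have sqB : B * B = Φ b := Real.mul_self_sqrt hΦb.le
  have hub1 : min (Φ a) (Dx * Dy) ≤ 2 * (A * Dx) := by
    rcases le_total a (r - ‖x‖) with h | h
    · have h1 : A ≤ Dx := Real.sqrt_le_sqrt (hΦmono a _ ha h)
      calc min (Φ a) (Dx * Dy) ≤ Φ a := min_le_left _ _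
        _ = A * A := sqA.symm
        _ ≤ 2 * (A * Dx) := by
          have h2 := mul_le_mul_of_nonneg_left h1 hApos.le
          have h3 := mul_nonneg hApos.le hDxpos.le
          linarith
    · have hdy2 : r - ‖y‖ ≤ 2 * a := by linarith
      have h2 : Φ (r - ‖y‖) ≤ 2 * Φ a :=
        le_trans (hΦmono _ (2 * a) hdy hdy2) (hΦl 2 (by norm_num) a ha)
      have hDy2 : Dy ≤ 2 * A := by
        have h3 : Φ (r - ‖y‖) ≤ (2 * A) ^ 2 := by
          have h4 : (2 * A) ^ 2 = 4 * Φ a := by rw [mul_pow, pow_two A, sqA]; norm_num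
          linarith
        calc Dy ≤ Real.sqrt ((2 * A) ^ 2) := Real.sqrt_le_sqrt h3
          _ = 2 * A := Real.sqrt_sq (by positivity)
      calc min (Φ a) (Dx * Dy) ≤ Dx * Dy := min_le_right _ _
        _ ≤ Dx * (2 * A) := mul_le_mul_of_nonneg_left hDy2 hDxpos.le
        _ = 2 * (A * Dx) := by ring
  have hub2 : min (Φ b) (Dz * Dw) ≤ 2 * (B * Dw) := by
    rcases le_total b (r - ‖w‖) with h | h
    · have h1 : B ≤ Dw := Real.sqrt_le_sqrt (hΦmono b _ hb h)
      calc min (Φ b) (Dz * Dw) ≤ Φ b := min_le_left _ _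
        _ = B * B := sqB.symm
        _ ≤ 2 * (B * Dw) := by
          have h2 := mul_le_mul_of_nonneg_left h1 hBpos.le
          have h3 := mul_nonneg hBpos.le hDwpos.le
          linarith
    · have hdz2 : r - ‖z‖ ≤ 2 * b := by linarith
      have h2 : Φ (r - ‖z‖) ≤ 2 * Φ b :=
        le_trans (hΦmono _ (2 * b) hdz hdz2) (hΦl 2 (by norm_num) b hb)
      have hDz2 : Dz ≤ 2 * B := by
        have h3 : Φ (r - ‖z‖) ≤ (2 * B) ^ 2 := by
          have h4 : (2 * B) ^ 2 = 4 * Φ b := by rw [mul_pow, pow_two B, sqB]; norm_num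
          linarith
        calc Dz ≤ Real.sqrt ((2 * B) ^ 2) := Real.sqrt_le_sqrt h3
          _ = 2 * B := Real.sqrt_sq (by positivity)
      calc min (Φ b) (Dz * Dw) ≤ Dz * Dw := min_le_right _ _
        _ ≤ (2 * B) * Dw := mul_le_mul_of_nonneg_right hDz2 hDwpos.le
        _ = 2 * (B * Dw) := by ring
  -- lower bound for min (Φ c) (Dx * Dw)
  have hm : 0 < max (r - ‖x‖) (r - ‖w‖) := lt_max_of_lt_left hdx
  have hΦm4 : Φ (max (r - ‖x‖) (r - ‖w‖)) ≤ 4 * Φ c := by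
    have h1 := hΦhalf _ hm
    have h2 : Φ (max (r - ‖x‖) (r - ‖w‖) / 2) ≤ Φ c :=
      hΦmono _ c (by positivity) (by linarith)
    linarith
  have hDxDw : Dx * Dw ≤ Φ (max (r - ‖x‖) (r - ‖w‖)) := by
    have hΦm : (0:ℝ) ≤ Φ (max (r - ‖x‖) (r - ‖w‖)) := (hΦpos _ hm).le
    have h1 : Dx ≤ Real.sqrt (Φ (max (r - ‖x‖) (r - ‖w‖))) :=
      Real.sqrt_le_sqrt (hΦmono _ _ hdx (le_max_left _ _))
    have h2 : Dw ≤ Real.sqrt (Φ (max (r - ‖x‖) (r - ‖w‖))) :=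
      Real.sqrt_le_sqrt (hΦmono _ _ hdw (le_max_right _ _))
    calc Dx * Dw ≤ Real.sqrt (Φ (max (r - ‖x‖) (r - ‖w‖))) *
          Real.sqrt (Φ (max (r - ‖x‖) (r - ‖w‖))) :=
        mul_le_mul h1 h2 hDwpos.le (Real.sqrt_nonneg _)
      _ = Φ (max (r - ‖x‖) (r - ‖w‖)) := Real.mul_self_sqrt hΦm
  have hlb : Dx * Dw / 4 ≤ min (Φ c) (Dx * Dw) :=
    le_min (by linarith) (by linarith [mul_nonneg hDxpos.le hDwpos.le])
  -- combined bounds on G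
  have hGxy_ub2 : G x y ≤ C * (2 * (A * Dx) / a ^ d) :=
    hGxy_ub.trans (mul_le_mul_of_nonneg_left
      (div_le_div₀ (by positivity) hub1 (pow_pos ha d) le_rfl) hC0.le)
  have hGzw_ub2 : G z w ≤ C * (2 * (B * Dw) / b ^ d) :=
    hGzw_ub.trans (mul_le_mul_of_nonneg_left
      (div_le_div₀ (by positivity) hub2 (pow_pos hb d) le_rfl) hC0.le)
  have hGxw_lb2 : C⁻¹ * (Dx * Dw / 4 / c ^ d) ≤ G x w :=
    le_trans (mul_le_mul_of_nonneg_left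
      (div_le_div₀ (le_min hΦc.le (by positivity)) hlb (pow_pos hc d) le_rfl)
      (inv_nonneg.mpr hC0.le)) hGxw_lb
  have hLpos : 0 < C⁻¹ * (Dx * Dw / 4 / c ^ d) := by positivity
  have hGzw_nonneg : 0 ≤ G z w :=
    le_trans (by positivity) hGzw_lb
  have hN1pos : 0 < C * (2 * (A * Dx) / a ^ d) := by positivity
  have hN2pos : 0 < C * (2 * (B * Dw) / b ^ d) := by positivity
  have hNum : G x y * G z w ≤ (C * (2 * (A * Dx) / a ^ d)) * (C * (2 * (B * Dw) / b ^ d)) :=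
    mul_le_mul hGxy_ub2 hGzw_ub2 hGzw_nonneg hN1pos.le
  have key : G x y * G z w / G x w ≤
      (C * (2 * (A * Dx) / a ^ d)) * (C * (2 * (B * Dw) / b ^ d)) /
        (C⁻¹ * (Dx * Dw / 4 / c ^ d)) :=
    div_le_div₀ (mul_nonneg hN1pos.le hN2pos.le) hNum hLpos hGxw_lb2
  refine key.trans (le_of_eq ?_)
  have hane : a ^ d ≠ 0 := (pow_pos ha d).ne'
  have hbne : b ^ d ≠ 0 := (pow_pos hb d).ne'
  have hcne : c ^ d ≠ 0 := (pow_pos hc d).ne'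
  field_simp
  ring
end

section
/- Let Φ: (0,∞) → (0,∞) be increasing, unbounded, with Φ(s) → 0 as s → 0, satisfying Φ(4r) ≤ 16·Φ(r) and the lower scaling Φ(|x_n|)^{1−γ} = 2^{nd} for a sequence |x_n| > 2^n, and suppose h: ℝ^d → [0,∞) satisfies h(y) ≥ c₃ Φ(|x_n|)^{−γ} for y ∈ B(x_n, r_n − 1) where r_n = 2^{−n}|x_n| + 1, and G(x,y) ≥ C⁻¹|x−y|^{−d}Φ(|x−y|) for all x ≠ y. Then for every x with |x| ≤ 1, ∫_{ℝ^d} h(y) G(x,y) dy = ∞. -/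
open MeasureTheory Metric

/-! The balls `B(x_m, 2^{-m}|x_m|)` are disjoint and, for `m ≥ 2`, at distance comparable to
`|x_m|` from the unit ball, so there `G(x, ·) ≳ |x_m|^{-d} Φ(|x_m|)` by monotonicity and doubling
of `Φ`. Hence `h G(x, ·)` has mass `≳ Φ(|x_m|)^{1-γ} 2^{-md}` on the `m`-th ball, a constant by the
choice of `x_m`; infinitely many disjoint balls of constant mass give `∞`. -/

theorem lintegral_eq_top_of_forall_le_setLIntegral {α ι : Type*} [MeasurableSpace α]
    [Countable ι] [Infinite ι] {μ : Measure α} {f : α → ENNReal} {S : ι → Set α} {κ : ENNReal}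
    (hS : ∀ i, MeasurableSet (S i)) (hdisj : Pairwise (Function.onFun Disjoint S)) (hκ : κ ≠ 0)
    (hle : ∀ i, κ ≤ ∫⁻ y in S i, f y ∂μ) : ∫⁻ y, f y ∂μ = ⊤ := by
  refine top_le_iff.mp ?_
  calc ⊤ = ∑' _ : ι, κ := (ENNReal.tsum_const_eq_top_of_ne_zero hκ).symm
    _ ≤ ∑' i, ∫⁻ y in S i, f y ∂μ := ENNReal.tsum_le_tsum hle
    _ = ∫⁻ y in ⋃ i, S i, f y ∂μ := (lintegral_iUnion hS hdisj f).symm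
    _ ≤ ∫⁻ y, f y ∂μ := setLIntegral_le_lintegral _ _

theorem ofReal_mul_measure_ball_le_setLIntegral {E : Type*} [NormedAddCommGroup E]
    [NormedSpace ℝ E] [MeasurableSpace E] [BorelSpace E] [FiniteDimensional ℝ E]
    (μ : Measure E) [μ.IsAddHaarMeasure] {f : E → ℝ} {z : E} {ρ a : ℝ} (hρ : 0 < ρ)
    (hf : ∀ y ∈ ball z ρ, a ≤ f y) :
    ENNReal.ofReal (a * ρ ^ Module.finrank ℝ E) * μ (ball 0 1) ≤
      ∫⁻ y in ball z ρ, ENNReal.ofReal (f y) ∂μ := by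
  calc ENNReal.ofReal (a * ρ ^ Module.finrank ℝ E) * μ (ball 0 1)
      ≤ ENNReal.ofReal a * μ (ball z ρ) := by
        rw [Measure.addHaar_ball_of_pos μ z hρ, ← mul_assoc, ← ENNReal.ofReal_mul' (by positivity)]
    _ = ∫⁻ _ in ball z ρ, ENNReal.ofReal a ∂μ := (setLIntegral_const _ _).symm
    _ ≤ ∫⁻ y in ball z ρ, ENNReal.ofReal (f y) ∂μ :=
        setLIntegral_mono' measurableSet_ball fun y hy => ENNReal.ofReal_le_ofReal (hf y hy)

theorem norm_sub_mem_Icc_of_mem_ball {E : Type*} [SeminormedAddCommGroup E]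
    {x z y : E} {ρ : ℝ} (hx : ‖x‖ ≤ 1) (hz : 4 ≤ ‖z‖) (hρ : ρ ≤ ‖z‖ / 4) (hy : y ∈ ball z ρ) :
    ‖x - y‖ ∈ Set.Icc (‖z‖ / 2) (4 * ‖z‖) := by
  rw [mem_ball, dist_eq_norm] at hy
  have h₁ := norm_sub_norm_le y x
  have h₂ := norm_sub_norm_le z y
  have h₃ := norm_sub_le x y
  have h₄ := norm_le_norm_add_norm_sub' y z
  rw [norm_sub_rev y x] at h₁
  rw [norm_sub_rev z y] at h₂
  constructor <;> linarith

section Doubling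

variable {Φ : ℝ → ℝ} (hmono : ∀ s t : ℝ, 0 < s → s ≤ t → Φ s ≤ Φ t)
  (hdbl : ∀ r > (0:ℝ), Φ (4 * r) ≤ 16 * Φ r)
include hmono hdbl

theorem le_sixteen_mul_of_half_le {X t : ℝ} (hX : 0 < X) (ht : X / 2 ≤ t) :
    Φ X ≤ 16 * Φ t :=
  calc Φ X ≤ Φ (4 * (X / 2)) := hmono _ _ hX (by linarith)
    _ ≤ 16 * Φ (X / 2) := hdbl _ (by positivity)
    _ ≤ 16 * Φ t := by gcongr; exact hmono _ _ (by positivity) ht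

theorem rpow_neg_mul_le_of_mem_Icc (d : ℕ) {X t : ℝ} (hX : 0 < X) (hΦX : 0 ≤ Φ X)
    (ht : t ∈ Set.Icc (X / 2) (4 * X)) :
    (4 * X) ^ (-(d:ℝ)) * (Φ X / 16) ≤ t ^ (-(d:ℝ)) * Φ t := by
  obtain ⟨hlo, hhi⟩ := ht
  have htpos : 0 < t := by linarith
  refine mul_le_mul (Real.rpow_le_rpow_of_nonpos htpos hhi (by simp)) ?_ (by positivity)
    (by positivity)
  linarith [le_sixteen_mul_of_half_le hmono hdbl hX hlo]

end Doubling

-- The left side is (bound on `h`) · (bound on `G`) · (radius)^d on the `m`-th ball.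
theorem mass_eq_of_rpow_one_sub_eq {d m : ℕ} {γ φ X c C : ℝ} (hφ : 0 < φ)
    (hX : 0 < X) (hφm : φ ^ (1 - γ) = 2 ^ ((m:ℝ) * d)) :
    c * φ ^ (-γ) * (C⁻¹ * ((4 * X) ^ (-(d:ℝ)) * (φ / 16))) * (2 ^ (-(m:ℝ)) * X) ^ d =
      c / (16 * C * 4 ^ d) := by
  have hφγ : φ ^ (-γ) * φ = 2 ^ ((m:ℝ) * d) := by
    rw [← hφm, sub_eq_neg_add, Real.rpow_add hφ, Real.rpow_one]
  have hradius : (2 ^ (-(m:ℝ)) * X) ^ d = (2 ^ ((m:ℝ) * d))⁻¹ * X ^ d := by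
    rw [mul_pow, ← Real.rpow_natCast _ d, ← Real.rpow_mul (by norm_num), neg_mul,
      Real.rpow_neg (by norm_num)]
  have hkernel : (4 * X) ^ (-(d:ℝ)) = ((4:ℝ) ^ d)⁻¹ * (X ^ d)⁻¹ := by
    rw [Real.rpow_neg (by positivity), Real.rpow_natCast, mul_pow, mul_inv]
  have h2 : (0:ℝ) < 2 ^ ((m:ℝ) * d) := by positivity
  have hXd : X ^ d ≠ 0 := by positivity
  calc _ = c * (φ ^ (-γ) * φ) * (C⁻¹ * (((4:ℝ) ^ d)⁻¹ * (X ^ d)⁻¹ / 16)) *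
        ((2 ^ ((m:ℝ) * d))⁻¹ * X ^ d) := by rw [hkernel, hradius]; ring
    _ = c / (16 * C * 4 ^ d) := by rw [hφγ]; field_simp

theorem const_le_setLIntegral_ball {d m : ℕ} (hm : 2 ≤ m) {γ c₃ C : ℝ} (hc₃ : 0 < c₃)
    (hC : 0 < C) {Φ : ℝ → ℝ} (hmono : ∀ s t : ℝ, 0 < s → s ≤ t → Φ s ≤ Φ t)
    (hdbl : ∀ r > (0:ℝ), Φ (4 * r) ≤ 16 * Φ r) {z x' : EuclideanSpace ℝ (Fin d)}
    (hx' : ‖x'‖ ≤ 1) (hz : (2:ℝ) ^ m < ‖z‖) (hΦz : 0 < Φ ‖z‖)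
    (hΦzγ : Φ ‖z‖ ^ (1 - γ) = 2 ^ ((m:ℝ) * d)) {h g : EuclideanSpace ℝ (Fin d) → ℝ}
    (hh : ∀ y ∈ ball z (2 ^ (-(m:ℝ)) * ‖z‖), c₃ * Φ ‖z‖ ^ (-γ) ≤ h y)
    (hg : ∀ y, x' ≠ y → C⁻¹ * (‖x' - y‖ ^ (-(d:ℝ)) * Φ ‖x' - y‖) ≤ g y) :
    ENNReal.ofReal (c₃ / (16 * C * 4 ^ d)) * volume (ball (0 : EuclideanSpace ℝ (Fin d)) 1) ≤
      ∫⁻ y in ball z (2 ^ (-(m:ℝ)) * ‖z‖), ENNReal.ofReal (h y * g y) := by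
  set X := ‖z‖
  have h4m : (4:ℝ) ≤ 2 ^ m := by
    calc (4:ℝ) = 2 ^ 2 := by norm_num
      _ ≤ 2 ^ m := pow_le_pow_right₀ (by norm_num) hm
  have hX : 4 ≤ X := by linarith
  have hρ : 2 ^ (-(m:ℝ)) * X ≤ X / 4 := by
    rw [Real.rpow_neg (by norm_num), Real.rpow_natCast, inv_mul_eq_div]
    gcongr
  have hpt : ∀ y ∈ ball z (2 ^ (-(m:ℝ)) * X),
      c₃ * Φ X ^ (-γ) * (C⁻¹ * ((4 * X) ^ (-(d:ℝ)) * (Φ X / 16))) ≤ h y * g y := by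
    intro y hy
    have hdist := norm_sub_mem_Icc_of_mem_ball hx' hX hρ hy
    have hne : x' ≠ y := fun hxy => by linarith [hdist.1, show ‖x' - y‖ = 0 by simp [hxy]]
    have hgy : C⁻¹ * ((4 * X) ^ (-(d:ℝ)) * (Φ X / 16)) ≤ g y :=
      (mul_le_mul_of_nonneg_left (rpow_neg_mul_le_of_mem_Icc hmono hdbl d (by linarith)
        hΦz.le hdist) (by positivity)).trans (hg y hne)
    have hhy := hh y hy
    exact mul_le_mul hhy hgy (by positivity) ((by positivity : 0 ≤ c₃ * Φ X ^ (-γ)).trans hhy)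
  have := ofReal_mul_measure_ball_le_setLIntegral volume (by positivity) hpt
  rwa [finrank_euclideanSpace_fin, mass_eq_of_rpow_one_sub_eq hΦz (by linarith) hΦzγ]
    at this

theorem stmt18_general (d : ℕ) (γ : ℝ)
    (Φ : ℝ → ℝ) (hΦpos : ∀ s > (0:ℝ), 0 < Φ s)
    (hmono : ∀ s t : ℝ, 0 < s → s ≤ t → Φ s ≤ Φ t)
    (hdbl : ∀ r > (0:ℝ), Φ (4 * r) ≤ 16 * Φ r)
    (x : ℕ → EuclideanSpace ℝ (Fin d))
    (hx : ∀ n, (2:ℝ) ^ n < ‖x n‖)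
    (hΦx : ∀ n, Φ ‖x n‖ ^ (1 - γ) = 2 ^ ((n : ℝ) * d))
    (r : ℕ → ℝ) (hrdef : ∀ n, r n = 2 ^ (-(n:ℝ)) * ‖x n‖ + 1)
    (hdisj : Pairwise (Function.onFun Disjoint fun n => Metric.ball (x n) (r n)))
    (c₃ : ℝ) (hc₃ : 0 < c₃)
    (h : EuclideanSpace ℝ (Fin d) → ℝ)
    (hh : ∀ n, ∀ y ∈ Metric.ball (x n) (r n - 1), c₃ * Φ ‖x n‖ ^ (-γ) ≤ h y)
    (C : ℝ) (hC : 1 ≤ C)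
    (G : EuclideanSpace ℝ (Fin d) → EuclideanSpace ℝ (Fin d) → ℝ)
    (hG : ∀ x' y : EuclideanSpace ℝ (Fin d), x' ≠ y →
      C⁻¹ * (‖x' - y‖ ^ (-(d:ℝ)) * Φ ‖x' - y‖) ≤ G x' y) :
    ∀ x' : EuclideanSpace ℝ (Fin d), ‖x'‖ ≤ 1 →
      ∫⁻ y, ENNReal.ofReal (h y * G x' y) = ⊤ := by
  intro x' hx'
  have hradius (m : ℕ) : r m - 1 = 2 ^ (-(m:ℝ)) * ‖x m‖ := by rw [hrdef]; ring
  -- Skip `x 0, x 1`: from `m = 2` on, the `m`-th ball stays away from the unit ball.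
  refine lintegral_eq_top_of_forall_le_setLIntegral
    (S := fun n => ball (x (n + 2)) (r (n + 2) - 1))
    (κ := ENNReal.ofReal (c₃ / (16 * C * 4 ^ d)) * volume (ball (0 : EuclideanSpace ℝ (Fin d)) 1))
    (fun _ => measurableSet_ball) ?_ ?_ fun n => ?_
  · exact fun i j hij => (hdisj (by omega : i + 2 ≠ j + 2)).mono
      (ball_subset_ball (by linarith)) (ball_subset_ball (by linarith))
  · exact mul_ne_zero (by simp only [ne_eq, ENNReal.ofReal_eq_zero, not_le]; positivity)
      (measure_ball_pos _ _ one_pos).ne'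
  · have hxpos : 0 < ‖x (n + 2)‖ := (pow_pos two_pos _).trans (hx _)
    simp only [hradius] at hh ⊢
    exact const_le_setLIntegral_ball (by omega) hc₃ (by linarith) hmono hdbl hx' (hx _)
      (hΦpos _ hxpos) (hΦx _) (hh _) (hG x')

/-- with `Φ` increasing, unbounded, vanishing at `0`, doubling
(`Φ(4r) ≤ 16 Φ(r)`), points `x_n` with `|x_n| > 2^n` and
`Φ(|x_n|)^{1−γ} = 2^{nd}`, radii `r_n = 2^{-n}|x_n| + 1`, `h ≥ c₃ Φ(|x_n|)^{-γ}`
on `B(x_n, r_n − 1)` and `G(x,y) ≥ C⁻¹ |x−y|^{-d} Φ(|x−y|)`, one has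
`∫ h(y) G(x,y) dy = ∞` for every `|x| ≤ 1`. -/
theorem stmt18 (d : ℕ) (hd : 1 ≤ d) (γ : ℝ) (hγ0 : 0 < γ) (hγ1 : γ < 1)
    (Φ : ℝ → ℝ) (hΦpos : ∀ s > (0:ℝ), 0 < Φ s)
    (hmono : ∀ s t : ℝ, 0 < s → s ≤ t → Φ s ≤ Φ t)
    (hunbdd : ∀ K : ℝ, ∃ s > (0:ℝ), K ≤ Φ s)
    (hΦ0 : Filter.Tendsto Φ (nhdsWithin 0 (Set.Ioi 0)) (nhds 0))
    (hdbl : ∀ r > (0:ℝ), Φ (4 * r) ≤ 16 * Φ r)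
    (x : ℕ → EuclideanSpace ℝ (Fin d))
    (hx : ∀ n, (2:ℝ) ^ n < ‖x n‖)
    (hΦx : ∀ n, Φ ‖x n‖ ^ (1 - γ) = 2 ^ ((n : ℝ) * d))
    (r : ℕ → ℝ) (hrdef : ∀ n, r n = 2 ^ (-(n:ℝ)) * ‖x n‖ + 1)
    (hdisj : Pairwise (Function.onFun Disjoint fun n => Metric.ball (x n) (r n)))
    (c₃ : ℝ) (hc₃ : 0 < c₃)
    (h : EuclideanSpace ℝ (Fin d) → ℝ) (hh_nn : ∀ y, 0 ≤ h y)
    (hh_meas : Measurable h)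
    (hh : ∀ n, ∀ y ∈ Metric.ball (x n) (r n - 1), c₃ * Φ ‖x n‖ ^ (-γ) ≤ h y)
    (C : ℝ) (hC : 1 ≤ C)
    (G : EuclideanSpace ℝ (Fin d) → EuclideanSpace ℝ (Fin d) → ℝ)
    (hG_nn : ∀ x y, 0 ≤ G x y) (hG_meas : ∀ x, Measurable (G x))
    (hG : ∀ x' y : EuclideanSpace ℝ (Fin d), x' ≠ y →
      C⁻¹ * (‖x' - y‖ ^ (-(d:ℝ)) * Φ ‖x' - y‖) ≤ G x' y) :
    ∀ x' : EuclideanSpace ℝ (Fin d), ‖x'‖ ≤ 1 →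
      ∫⁻ y, ENNReal.ofReal (h y * G x' y) = ⊤ :=
  stmt18_general d γ Φ hΦpos hmono hdbl x hx hΦx r hrdef hdisj c₃ hc₃ h hh C hC G hG
end
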